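/- (Deletion theorem) Let (V, #, ∗) be a strongly left distributive hypervector space over a hyperfield (F, ⊕, ·), and suppose V is generated by a linearly dependent set {α₁, α₂, ..., αₙ} ⊆ V, i.e., V = HL(α₁, ..., αₙ). Then V can be generated by a proper subset: there exists an index i such that V = HL(α₁, ..., α_{i−1}, α_{i+1}, ..., αₙ). -/
import Mathlib


universe u v

/-- A hyperfield: `(F, ⊕, ·)` where `(F, ⊕)` is a commutative hypergroup with zero
element `zero` (each `a` having a unique additive inverse `neg a`, and satisfying
reversibility), and `·` is an associative commutative multiplication distributing
over `⊕` from both sides, with `a·0 = 0·a = 0`, an identity `one` and multiplicative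
inverses for nonzero elements. -/
structure Hyperfield (F : Type u) where
  add : F → F → Set F
  add_nonempty : ∀ a b, (add a b).Nonempty
  add_comm : ∀ a b, add a b = add b a
  add_assoc : ∀ a b c, (⋃ t ∈ add b c, add a t) = ⋃ t ∈ add a b, add t c
  zero : F
  neg : F → F
  neg_spec : ∀ a, zero ∈ add a (neg a) ∧ zero ∈ add (neg a) a
  neg_unique : ∀ a b, zero ∈ add a b → zero ∈ add b a → b = neg a
  reversible : ∀ a b c, a ∈ add b c → b ∈ add a (neg c)
  mul : F → F → F
  mul_assoc : ∀ a b c, mul (mul a b) c = mul a (mul b c)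
  left_distrib : ∀ a b c, (mul a) '' (add b c) = add (mul a b) (mul a c)
  right_distrib : ∀ a b c, (fun t => mul t a) '' (add b c) = add (mul b a) (mul c a)
  mul_zero : ∀ a, mul a zero = zero
  zero_mul : ∀ a, mul zero a = zero
  one : F
  mul_one : ∀ a, mul a one = a
  one_ne_zero : one ≠ zero
  mul_comm : ∀ a b, mul a b = mul b a
  exists_inv : ∀ a, a ≠ zero → ∃ b, mul a b = one

/-- A hypervector space `(V, #, ∗)` over a hyperfield `K` on `F`:
`(V, #)` is a commutative hypergroup with zero vector `vzero`, and
`∗ : F × V → P*(V)` satisfies (i) `a ∗ (α # β) ⊆ a∗α # a∗β`,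
(ii) `(a ⊕ b) ∗ α ⊆ a∗α # b∗α`, (iii) `(a·b) ∗ α = a ∗ (b ∗ α)`,
(iv) `1 ∗ α = {α}` and `0 ∗ α = {θ}`. -/
structure HypervectorSpace (F : Type u) (V : Type v) (K : Hyperfield F) where
  vadd : V → V → Set V
  vadd_nonempty : ∀ x y, (vadd x y).Nonempty
  vadd_comm : ∀ x y, vadd x y = vadd y x
  vadd_assoc : ∀ x y z, (⋃ t ∈ vadd y z, vadd x t) = ⋃ t ∈ vadd x y, vadd t z
  vzero : V
  vneg : V → V
  vneg_spec : ∀ x, vzero ∈ vadd x (vneg x) ∧ vzero ∈ vadd (vneg x) x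
  vneg_unique : ∀ x y, vzero ∈ vadd x y → vzero ∈ vadd y x → y = vneg x
  vreversible : ∀ x y z, x ∈ vadd y z → y ∈ vadd x (vneg z)
  smul : F → V → Set V
  smul_nonempty : ∀ a x, (smul a x).Nonempty
  smul_vadd : ∀ a x y, (⋃ t ∈ vadd x y, smul a t) ⊆ ⋃ u ∈ smul a x, ⋃ w ∈ smul a y, vadd u w
  add_smul : ∀ a b x, (⋃ t ∈ K.add a b, smul t x) ⊆ ⋃ u ∈ smul a x, ⋃ w ∈ smul b x, vadd u w
  mul_smul : ∀ a b x, smul (K.mul a b) x = ⋃ t ∈ smul b x, smul a t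
  one_smul : ∀ x, smul K.one x = {x}
  zero_smul : ∀ x, smul K.zero x = {vzero}

namespace HypervectorSpace

variable {F : Type u} {V : Type v} {K : Hyperfield F}

/-- The hyperoperation `#` extended to subsets: `A # B = ⋃_{a ∈ A, b ∈ B} a # b`. -/
def setVadd (H : HypervectorSpace F V K) (A B : Set V) : Set V :=
  ⋃ a ∈ A, ⋃ b ∈ B, H.vadd a b

/-- A subset `W` of a hypervector space is a hypersubspace if it is closed under `#`
and `∗`, contains the zero vector, and contains additive inverses. -/
def IsHypersubspace (H : HypervectorSpace F V K) (W : Set V) : Prop :=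
  (∀ α ∈ W, ∀ β ∈ W, H.vadd α β ⊆ W) ∧
  (∀ a : F, ∀ α ∈ W, H.smul a α ⊆ W) ∧
  H.vzero ∈ W ∧
  (∀ α ∈ W, H.vneg α ∈ W)

/-- Iterated hyperoperation `A₁ # A₂ # ... # Aₙ` on a list of subsets
(by convention the empty hypersum is `{θ}`). -/
def hsum (H : HypervectorSpace F V K) : List (Set V) → Set V
  | [] => {H.vzero}
  | [A] => A
  | A :: B :: rest => H.setVadd A (HypervectorSpace.hsum H (B :: rest))

/-- The linear combination set `a₁∗α₁ # a₂∗α₂ # ... # aₙ∗αₙ`. -/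
def lincomb (H : HypervectorSpace F V K) {n : ℕ} (a : Fin n → F) (α : Fin n → V) : Set V :=
  H.hsum (List.ofFn fun i => H.smul (a i) (α i))

/-- The hyperlinear span `HL(α₁, ..., αₙ) = ⋃ { a₁∗α₁ # ... # aₙ∗αₙ : a₁, ..., aₙ ∈ F }`. -/
def HL (H : HypervectorSpace F V K) {n : ℕ} (α : Fin n → V) : Set V :=
  ⋃ a : Fin n → F, H.lincomb a α

/-- The family `α₁, ..., αₙ` is linearly dependent if `θ ∈ a₁∗α₁ # ... # aₙ∗αₙ`
for some scalars `a₁, ..., aₙ`, not all zero. -/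
def LinDep (H : HypervectorSpace F V K) {n : ℕ} (α : Fin n → V) : Prop :=
  ∃ a : Fin n → F, (∃ i, a i ≠ K.zero) ∧ H.vzero ∈ H.lincomb a α

/-- Strongly left distributive: equality `(a ⊕ b) ∗ α = a∗α # b∗α`. -/
def StronglyLeftDistrib (H : HypervectorSpace F V K) : Prop :=
  ∀ (a b : F) (x : V),
    (⋃ t ∈ K.add a b, H.smul t x) = ⋃ u ∈ H.smul a x, ⋃ w ∈ H.smul b x, H.vadd u w

/-- The set of all finite linear combinations of elements of `S`. -/
def HLSet (H : HypervectorSpace F V K) (S : Set V) : Set V :=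
  ⋃ n : ℕ, ⋃ β : Fin n → V, ⋃ (_ : ∀ i, β i ∈ S), H.HL β

/-- A set `S` is linearly independent if every finite family of distinct elements
of `S` is linearly independent. -/
def LinIndepSet (H : HypervectorSpace F V K) (S : Set V) : Prop :=
  ∀ (n : ℕ) (β : Fin n → V), Function.Injective β → (∀ i, β i ∈ S) → ¬ H.LinDep β

/-- `S` is a basis of the hypersubspace `U`: `S ⊆ U`, `S` is linearly independent,
and every element of `U` is a finite linear combination of elements of `S`. -/
def IsBasisOf (H : HypervectorSpace F V K) (S U : Set V) : Prop :=
  S ⊆ U ∧ H.LinIndepSet S ∧ U ⊆ H.HLSet S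

end HypervectorSpace

namespace HypervectorSpace

variable {F : Type u} {V : Type v} {K : Hyperfield F} (H : HypervectorSpace F V K)

theorem mem_setVadd {A B : Set V} {x : V} :
    x ∈ H.setVadd A B ↔ ∃ a ∈ A, ∃ b ∈ B, x ∈ H.vadd a b := by
  simp [setVadd]

theorem setVadd_comm' (A B : Set V) : H.setVadd A B = H.setVadd B A := by
  ext x
  simp only [H.mem_setVadd]
  constructor <;> rintro ⟨a, ha, b, hb, hx⟩ <;> exact ⟨b, hb, a, ha, by rwa [H.vadd_comm]⟩

theorem setVadd_assoc' (A B C : Set V) :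
    H.setVadd (H.setVadd A B) C = H.setVadd A (H.setVadd B C) := by
  ext x
  simp only [H.mem_setVadd]
  constructor
  · rintro ⟨t, ⟨a, ha, b, hb, ht⟩, c, hc, hx⟩
    have h1 : x ∈ ⋃ t' ∈ H.vadd a b, H.vadd t' c := Set.mem_biUnion ht hx
    rw [← H.vadd_assoc] at h1
    obtain ⟨s, hs, hx'⟩ := Set.mem_iUnion₂.1 h1
    exact ⟨a, ha, s, ⟨b, hb, c, hc, hs⟩, hx'⟩
  · rintro ⟨a, ha, t, ⟨b, hb, c, hc, ht⟩, hx⟩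
    have h1 : x ∈ ⋃ t' ∈ H.vadd b c, H.vadd a t' := Set.mem_biUnion ht hx
    rw [H.vadd_assoc] at h1
    obtain ⟨s, hs, hx'⟩ := Set.mem_iUnion₂.1 h1
    exact ⟨s, ⟨a, ha, b, hb, hs⟩, c, hc, hx'⟩

theorem setVadd_mono {A A' B B' : Set V} (h1 : A ⊆ A') (h2 : B ⊆ B') :
    H.setVadd A B ⊆ H.setVadd A' B' := by
  intro x hx
  rw [H.mem_setVadd] at hx ⊢
  obtain ⟨a, ha, b, hb, hx⟩ := hx
  exact ⟨a, h1 ha, b, h2 hb, hx⟩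

theorem vneg_vneg (x : V) : H.vneg (H.vneg x) = x :=
  (H.vneg_unique (H.vneg x) x (H.vneg_spec x).2 (H.vneg_spec x).1).symm

theorem zero_vadd' (x : V) : H.vadd H.vzero x = {x} := by
  ext y
  simp only [Set.mem_singleton_iff]
  constructor
  · intro hy
    have h1 : H.vzero ∈ H.vadd y (H.vneg x) := H.vreversible y H.vzero x hy
    have h2 : H.vzero ∈ H.vadd (H.vneg x) y := by rwa [H.vadd_comm]
    have h3 : H.vneg x = H.vneg y := H.vneg_unique y (H.vneg x) h1 h2
    calc y = H.vneg (H.vneg y) := (H.vneg_vneg y).symm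
    _ = H.vneg (H.vneg x) := by rw [h3]
    _ = x := H.vneg_vneg x
  · rintro rfl
    have := H.vreversible H.vzero y (H.vneg y) (H.vneg_spec y).1
    rwa [H.vneg_vneg] at this

theorem setVadd_zero' (A : Set V) : H.setVadd A {H.vzero} = A := by
  ext x
  rw [H.mem_setVadd]
  constructor
  · rintro ⟨a, ha, b, hb, hx⟩
    rw [Set.mem_singleton_iff] at hb
    subst hb
    rw [H.vadd_comm, H.zero_vadd'] at hx
    rwa [← hx] at ha
  · intro hx
    exact ⟨x, hx, H.vzero, rfl, by rw [H.vadd_comm, H.zero_vadd']; rfl⟩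

theorem hsum_cons (A : Set V) (L : List (Set V)) :
    H.hsum (A :: L) = H.setVadd A (H.hsum L) := by
  cases L with
  | nil => simp [hsum, H.setVadd_zero']
  | cons B rest => rfl

theorem hsum_ofFn_zero (f : Fin 0 → Set V) : H.hsum (List.ofFn f) = {H.vzero} := rfl

theorem hsum_ofFn_succ {m : ℕ} (f : Fin (m + 1) → Set V) :
    H.hsum (List.ofFn f) = H.setVadd (f 0) (H.hsum (List.ofFn fun j => f j.succ)) := by
  rw [List.ofFn_succ, H.hsum_cons]

theorem hsum_ofFn_succAbove {m : ℕ} (f : Fin (m + 1) → Set V) (i : Fin (m + 1)) :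
    H.hsum (List.ofFn f) = H.setVadd (f i) (H.hsum (List.ofFn fun j => f (i.succAbove j))) := by
  induction m with
  | zero =>
    have hi : i = 0 := Fin.fin_one_eq_zero i
    subst hi
    rw [H.hsum_ofFn_succ]
    rfl
  | succ m ih =>
    induction i using Fin.cases with
    | zero =>
      simp only [Fin.zero_succAbove]
      exact H.hsum_ofFn_succ f
    | succ j =>
      rw [H.hsum_ofFn_succ, ih (fun k => f k.succ) j]
      rw [← H.setVadd_assoc', H.setVadd_comm' (f 0) (f j.succ), H.setVadd_assoc']
      rw [H.hsum_ofFn_succ (fun k => f (j.succ.succAbove k))]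
      simp only [Fin.succ_succAbove_zero, Fin.succ_succAbove_succ]


theorem setVadd_setVadd_comm (A B C D : Set V) :
    H.setVadd (H.setVadd A B) (H.setVadd C D) = H.setVadd (H.setVadd A C) (H.setVadd B D) := by
  rw [H.setVadd_assoc' A B (H.setVadd C D), H.setVadd_assoc' A C (H.setVadd B D)]
  rw [← H.setVadd_assoc' B C D, H.setVadd_comm' B C, H.setVadd_assoc' C B D]

theorem setVadd_hsum_ofFn {m : ℕ} (f g : Fin m → Set V) :
    H.setVadd (H.hsum (List.ofFn f)) (H.hsum (List.ofFn g)) =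
    H.hsum (List.ofFn fun j => H.setVadd (f j) (g j)) := by
  induction m with
  | zero =>
    rw [H.hsum_ofFn_zero, H.hsum_ofFn_zero, H.hsum_ofFn_zero, H.setVadd_zero']
  | succ m ih =>
    rw [H.hsum_ofFn_succ f, H.hsum_ofFn_succ g,
      H.hsum_ofFn_succ (fun j => H.setVadd (f j) (g j)),
      H.setVadd_setVadd_comm, ih]

theorem hsum_ofFn_iUnion {ι : Type u} :
    ∀ {m : ℕ} {S : Fin m → Set ι} {G : Fin m → ι → Set V} {x : V},
    x ∈ H.hsum (List.ofFn fun j => ⋃ t ∈ S j, G j t) →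
    ∃ c : Fin m → ι, (∀ j, c j ∈ S j) ∧ x ∈ H.hsum (List.ofFn fun j => G j (c j)) := by
  intro m
  induction m with
  | zero => exact fun {S G x} hx => ⟨Fin.elim0, fun j => j.elim0, hx⟩
  | succ m ih =>
    intro S G x hx
    rw [H.hsum_ofFn_succ, H.mem_setVadd] at hx
    obtain ⟨p, hp, q, hq, hx⟩ := hx
    obtain ⟨t0, ht0, hp⟩ := Set.mem_iUnion₂.1 hp
    obtain ⟨c, hc, hq'⟩ := ih (S := fun j => S j.succ) (G := fun j => G j.succ) hq
    refine ⟨Fin.cons t0 c, ?_, ?_⟩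
    · intro j
      induction j using Fin.cases with
      | zero => simpa using ht0
      | succ k => simpa using hc k
    · rw [H.hsum_ofFn_succ, H.mem_setVadd]
      simp only [Fin.cons_zero, Fin.cons_succ]
      exact ⟨p, hp, q, hq', hx⟩

theorem smul_vzero (a : F) : H.smul a H.vzero = {H.vzero} := by
  have h := H.mul_smul a K.zero H.vzero
  rw [K.mul_zero, H.zero_smul] at h
  simpa using h.symm

theorem smul_hsum_ofFn (a : F) : ∀ {m : ℕ} (f : Fin m → Set V),
    (⋃ t ∈ H.hsum (List.ofFn f), H.smul a t) ⊆
    H.hsum (List.ofFn fun j => ⋃ t ∈ f j, H.smul a t) := by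
  intro m
  induction m with
  | zero =>
    intro f
    rw [H.hsum_ofFn_zero, H.hsum_ofFn_zero]
    simp [H.smul_vzero]
  | succ m ih =>
    intro f
    rw [H.hsum_ofFn_succ f, H.hsum_ofFn_succ (fun j => ⋃ t ∈ f j, H.smul a t)]
    intro x hx
    obtain ⟨t, ht, hx⟩ := Set.mem_iUnion₂.1 hx
    rw [H.mem_setVadd] at ht
    obtain ⟨p, hp, q, hq, ht⟩ := ht
    have h1 := H.smul_vadd a p q (Set.mem_biUnion ht hx)
    obtain ⟨u, hu, h2⟩ := Set.mem_iUnion₂.1 h1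
    obtain ⟨w, hw, hx'⟩ := Set.mem_iUnion₂.1 h2
    rw [H.mem_setVadd]
    exact ⟨u, Set.mem_biUnion hp hu, w, ih (fun j => f j.succ) (Set.mem_biUnion hq hw), hx'⟩

theorem vneg_mem_smul_neg_one (hsld : H.StronglyLeftDistrib) (w : V) :
    H.vneg w ∈ H.smul (K.neg K.one) w := by
  have h0 : H.vzero ∈ ⋃ t ∈ K.add K.one (K.neg K.one), H.smul t w := by
    refine Set.mem_biUnion (K.neg_spec K.one).1 ?_
    rw [H.zero_smul]
    rfl
  rw [hsld, H.one_smul] at h0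
  obtain ⟨u, hu, h1⟩ := Set.mem_iUnion₂.1 h0
  rw [Set.mem_singleton_iff] at hu
  obtain ⟨v, hv, h2⟩ := Set.mem_iUnion₂.1 h1
  rw [hu] at h2
  have h3 : H.vzero ∈ H.vadd v w := by rwa [H.vadd_comm]
  rwa [← H.vneg_unique w v h2 h3]

end HypervectorSpace

/-- Deletion theorem: if a strongly left distributive hypervector space `V` is
generated by a linearly dependent set `{α₁, ..., αₙ}`, then `V` is generated by a
proper subset obtained by deleting a suitable `αᵢ`. -/
theorem HypervectorSpace.deletion {F : Type u} {V : Type v}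
    {K : Hyperfield F} (H : HypervectorSpace F V K)
    (hsld : H.StronglyLeftDistrib) {n : ℕ} (α : Fin (n + 1) → V)
    (hdep : H.LinDep α) (hgen : H.HL α = Set.univ) :
    ∃ i : Fin (n + 1), H.HL (α ∘ i.succAbove) = Set.univ := by
  obtain ⟨a, ⟨i, hai⟩, hz⟩ := hdep
  refine ⟨i, ?_⟩
  -- unfold the dependence relation, pulling out index i
  have hz' : H.vzero ∈ H.setVadd (H.smul (a i) (α i))
      (H.hsum (List.ofFn fun j => H.smul (a (i.succAbove j)) (α (i.succAbove j)))) := by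
    have := hz
    rw [lincomb, H.hsum_ofFn_succAbove (fun j => H.smul (a j) (α j)) i] at this
    exact this
  rw [H.mem_setVadd] at hz'
  obtain ⟨p, hp, w, hw, hzw⟩ := hz'
  have hpw : p = H.vneg w := by
    have h1 := H.vreversible H.vzero p w hzw
    rwa [H.zero_vadd', Set.mem_singleton_iff] at h1
  obtain ⟨c, hc⟩ := K.exists_inv (a i) hai
  -- α i ∈ c ∗ p
  have hαi : α i ∈ H.smul c p := by
    have h1 := H.mul_smul c (a i) (α i)
    rw [K.mul_comm c (a i), hc, H.one_smul] at h1
    obtain ⟨y, hy⟩ := H.smul_nonempty c p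
    have h2 : y ∈ ({α i} : Set V) := h1 ▸ Set.mem_biUnion hp hy
    rw [Set.mem_singleton_iff] at h2
    rwa [← h2]
  -- α i ∈ d ∗ w with d = c · (-1)
  set d := K.mul c (K.neg K.one) with hd
  have hαi2 : α i ∈ H.smul d w := by
    rw [hd, H.mul_smul]
    exact Set.mem_biUnion (H.vneg_mem_smul_neg_one hsld w) (hpw ▸ hαi)
  -- α i is a linear combination of the remaining vectors
  have hαi3 : α i ∈ H.lincomb (fun j => K.mul d (a (i.succAbove j))) (α ∘ i.succAbove) := by
    have h1 : α i ∈ ⋃ t ∈ H.hsum (List.ofFn fun j =>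
        H.smul (a (i.succAbove j)) (α (i.succAbove j))), H.smul d t :=
      Set.mem_biUnion hw hαi2
    have h2 := H.smul_hsum_ofFn d (fun j => H.smul (a (i.succAbove j)) (α (i.succAbove j))) h1
    have he : (fun j => ⋃ t ∈ H.smul (a (i.succAbove j)) (α (i.succAbove j)), H.smul d t)
        = fun j => H.smul (K.mul d (a (i.succAbove j))) (α (i.succAbove j)) := by
      funext j
      exact (H.mul_smul d (a (i.succAbove j)) (α (i.succAbove j))).symm
    rw [he] at h2
    exact h2
  -- now every x is in the span of the remaining vectors
  rw [Set.eq_univ_iff_forall]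
  intro x
  have hx : x ∈ H.HL α := hgen ▸ Set.mem_univ x
  obtain ⟨b, hb⟩ := Set.mem_iUnion.1 hx
  rw [lincomb, H.hsum_ofFn_succAbove (fun j => H.smul (b j) (α j)) i] at hb
  -- b i ∗ (α i) is contained in a linear combination of the remaining vectors
  have hsub1 : H.smul (b i) (α i) ⊆ H.hsum (List.ofFn fun j =>
      H.smul (K.mul (b i) (K.mul d (a (i.succAbove j)))) (α (i.succAbove j))) := by
    intro y hy
    have h1 : y ∈ ⋃ t ∈ H.hsum (List.ofFn fun j =>
        H.smul (K.mul d (a (i.succAbove j))) (α (i.succAbove j))), H.smul (b i) t :=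
      Set.mem_biUnion hαi3 hy
    have h2 := H.smul_hsum_ofFn (b i)
      (fun j => H.smul (K.mul d (a (i.succAbove j))) (α (i.succAbove j))) h1
    have he : (fun j => ⋃ t ∈ H.smul (K.mul d (a (i.succAbove j))) (α (i.succAbove j)), H.smul (b i) t)
        = fun j => H.smul (K.mul (b i) (K.mul d (a (i.succAbove j)))) (α (i.succAbove j)) := by
      funext j
      exact (H.mul_smul (b i) (K.mul d (a (i.succAbove j))) (α (i.succAbove j))).symm
    rw [he] at h2
    exact h2
  have hb2 : x ∈ H.setVadd
      (H.hsum (List.ofFn fun j =>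
        H.smul (K.mul (b i) (K.mul d (a (i.succAbove j)))) (α (i.succAbove j))))
      (H.hsum (List.ofFn fun j => H.smul (b (i.succAbove j)) (α (i.succAbove j)))) :=
    H.setVadd_mono hsub1 (subset_refl _) hb
  rw [H.setVadd_hsum_ofFn] at hb2
  have hb3 : x ∈ H.hsum (List.ofFn fun j =>
      ⋃ t ∈ K.add (K.mul (b i) (K.mul d (a (i.succAbove j)))) (b (i.succAbove j)),
        H.smul t (α (i.succAbove j))) := by
    convert hb2 using 3
    funext j
    exact hsld _ _ _
  obtain ⟨cf, _, hx'⟩ := H.hsum_ofFn_iUnion hb3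
  exact Set.mem_iUnion.2 ⟨cf, hx'⟩
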